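/- Let x, y ∈ ℝ⁶ be vectors normalized so that either Q(x) = Q(y) = 1 or Q(x) = Q(y) = −1. Then the complex-linear operator M = X(x)·conj(X(y)) (the product of the two antilinear Clifford operators) belongs to SU(2,2): M G M† = G and det M = 1, where M† is the conjugate transpose. (This realizes elements of the spin group Spin(4,2) inside SU(2,2).) -/

import Mathlib

open Matrix Complex

/-- The six antilinear-Clifford matrices Γ₁,…,Γ₆ (indexed 0,…,5). -/
noncomputable def Gam : Fin 6 → Matrix (Fin 4) (Fin 4) ℂ
  | 0 => !![0, 0, I, 0; 0, 0, 0, -I; I, 0, 0, 0; 0, -I, 0, 0]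
  | 1 => !![0, 0, 1, 0; 0, 0, 0, 1; 1, 0, 0, 0; 0, 1, 0, 0]
  | 2 => !![0, 0, 0, -I; 0, 0, -I, 0; 0, -I, 0, 0; -I, 0, 0, 0]
  | 3 => !![0, I, 0, 0; -I, 0, 0, 0; 0, 0, 0, I; 0, 0, -I, 0]
  | 4 => !![0, 0, 0, -1; 0, 0, 1, 0; 0, 1, 0, 0; -1, 0, 0, 0]
  | 5 => !![0, 1, 0, 0; -1, 0, 0, 0; 0, 0, 0, -1; 0, 0, 1, 0]

/-- X(x) = Σ x^α Γ_α. -/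
noncomputable def Xm (x : Fin 6 → ℝ) : Matrix (Fin 4) (Fin 4) ℂ :=
  ∑ α : Fin 6, (x α : ℂ) • Gam α

/-- The quadratic form of signature (4,2). -/
def Qform (x : Fin 6 → ℝ) : ℝ :=
  x 0 ^ 2 + x 1 ^ 2 + x 2 ^ 2 - x 3 ^ 2 + x 4 ^ 2 - x 5 ^ 2

/-- The bilinear form of signature (4,2). -/
def Qbil (x y : Fin 6 → ℝ) : ℝ :=
  x 0 * y 0 + x 1 * y 1 + x 2 * y 2 - x 3 * y 3 + x 4 * y 4 - x 5 * y 5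

/-- G = diag(1,1,-1,-1) as a function. -/
def Gv : Fin 4 → ℝ := ![1, 1, -1, -1]

/-- The pseudo-Hermitian form of signature (2,2) on ℂ⁴. -/
def herm (u v : Fin 4 → ℂ) : ℂ :=
  u 0 * starRingEnd ℂ (v 0) + u 1 * starRingEnd ℂ (v 1)
    - u 2 * starRingEnd ℂ (v 2) - u 3 * starRingEnd ℂ (v 3)

/-- The Levi-Civita symbol on four indices, ε^{0123} = 1. -/
noncomputable def eps (i j k l : Fin 4) : ℝ :=
  (((j : ℕ) : ℝ) - ((i : ℕ) : ℝ)) * (((k : ℕ) : ℝ) - ((i : ℕ) : ℝ)) *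
    (((l : ℕ) : ℝ) - ((i : ℕ) : ℝ)) * (((k : ℕ) : ℝ) - ((j : ℕ) : ℝ)) *
    (((l : ℕ) : ℝ) - ((j : ℕ) : ℝ)) * (((l : ℕ) : ℝ) - ((k : ℕ) : ℝ)) / 12

/-- The six antisymmetric matrices Σ₁,…,Σ₆ (indexed 0,…,5). -/
noncomputable def Sig : Fin 6 → Matrix (Fin 4) (Fin 4) ℂ
  | 0 => !![0, 0, -I, 0; 0, 0, 0, I; I, 0, 0, 0; 0, -I, 0, 0]
  | 1 => !![0, 0, -1, 0; 0, 0, 0, -1; 1, 0, 0, 0; 0, 1, 0, 0]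
  | 2 => !![0, 0, 0, I; 0, 0, I, 0; 0, -I, 0, 0; -I, 0, 0, 0]
  | 3 => !![0, I, 0, 0; -I, 0, 0, 0; 0, 0, 0, -I; 0, 0, I, 0]
  | 4 => !![0, 0, 0, 1; 0, 0, -1, 0; 0, 1, 0, 0; -1, 0, 0, 0]
  | 5 => !![0, 1, 0, 0; -1, 0, 0, 0; 0, 0, 0, 1; 0, 0, -1, 0]

/-- Σ(x) = Σ x^α Σ_α. -/
noncomputable def Sm (x : Fin 6 → ℝ) : Matrix (Fin 4) (Fin 4) ℂ :=
  ∑ α : Fin 6, (x α : ℂ) • Sig α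

/-- The antilinear Hodge star on antisymmetric 4×4 complex matrices. -/
noncomputable def hstar (A : Matrix (Fin 4) (Fin 4) ℂ) : Matrix (Fin 4) (Fin 4) ℂ :=
  Matrix.of fun i j =>
    (1 / 2 : ℂ) * ∑ k : Fin 4, ∑ l : Fin 4,
      ((eps i j k l : ℝ) : ℂ) * ((Gv k : ℝ) : ℂ) * ((Gv l : ℝ) : ℂ) * starRingEnd ℂ (A k l)

/-!
`X(x) G` is antisymmetric with Pfaffian `-Q(x)`; this gives `X(x)ᵀ = -G X(x) G` and
`det X(x) = Q(x)²`. With the antilinear Clifford relation `X(x) · conj X(x) = Q(x)`, the former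
reduces `M G M†` to `X(x) (conj X(y) X(y)) conj X(x) G = Q(x) Q(y) G`, and the latter gives
`det M = (Q(x) Q(y))²`; the normalization makes `Q(x) Q(y) = 1`.
-/

open ComplexConjugate

local notation "𝐆" => diagonal fun i : Fin 4 => ((Gv i : ℝ) : ℂ)

def pfaffMatrix {R : Type*} [Neg R] [Zero R] (a b c d e f : R) : Matrix (Fin 4) (Fin 4) R :=
  !![0, a, b, c; -a, 0, d, e; -b, -d, 0, f; -c, -e, -f, 0]

theorem transpose_pfaffMatrix {R : Type*} [CommRing R] (a b c d e f : R) :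
    (pfaffMatrix a b c d e f)ᵀ = -pfaffMatrix a b c d e f := by
  ext i j
  fin_cases i <;> fin_cases j <;> simp [pfaffMatrix]

theorem det_pfaffMatrix {R : Type*} [CommRing R] (a b c d e f : R) :
    (pfaffMatrix a b c d e f).det = (a * f - b * e + c * d) ^ 2 := by
  rw [det_succ_row_zero]
  simp [pfaffMatrix, Fin.sum_univ_four, det_fin_three, Fin.succAbove]
  ring

theorem transpose_eq_neg_mul_mul_of_transpose_mul_eq_neg {n R : Type*} [Fintype n]
    [DecidableEq n] [CommRing R] {A G : Matrix n n R} (hG : G * G = 1) (hGt : Gᵀ = G) (h : (A * G)ᵀ = -(A * G)) :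
    Aᵀ = -(G * A * G) :=
  calc Aᵀ = G * (G * Aᵀ) := by rw [← Matrix.mul_assoc, hG, Matrix.one_mul]
    _ = G * (A * G)ᵀ := by rw [transpose_mul, hGt]
    _ = -(G * A * G) := by rw [h, Matrix.mul_neg, Matrix.mul_assoc]

theorem G_mul_G : 𝐆 * 𝐆 = 1 := by
  rw [diagonal_mul_diagonal, ← diagonal_one]
  congr 1
  ext i
  fin_cases i <;> norm_num [Gv]

theorem det_G : (𝐆).det = 1 := by
  simp [det_diagonal, Fin.prod_univ_four, Gv]

theorem map_conj_G : (𝐆).map conj = 𝐆 := by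
  simp [diagonal_map]

theorem Xm_eq (x : Fin 6 → ℝ) : Xm x =
    !![0, I * x 3 + x 5, I * x 0 + x 1, -I * x 2 - x 4;
       -I * x 3 - x 5, 0, -I * x 2 + x 4, -I * x 0 + x 1;
       I * x 0 + x 1, -I * x 2 + x 4, 0, I * x 3 - x 5;
       -I * x 2 - x 4, -I * x 0 + x 1, -I * x 3 + x 5, 0] := by
  ext i j
  fin_cases i <;> fin_cases j <;> simp [Xm, Gam, Fin.sum_univ_six] <;> ring

theorem Xm_mul_G (x : Fin 6 → ℝ) :
    Xm x * 𝐆 = pfaffMatrix (I * x 3 + x 5) (-I * x 0 - x 1) (I * x 2 + x 4)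
      (I * x 2 - x 4) (I * x 0 - x 1) (-I * x 3 + x 5) := by
  rw [Xm_eq]
  ext i j
  fin_cases i <;> fin_cases j <;> simp [pfaffMatrix, Gv] <;> ring

theorem det_Xm (x : Fin 6 → ℝ) : (Xm x).det = (Qform x : ℂ) ^ 2 := by
  have hPf : (I * x 3 + x 5) * (-I * x 3 + x 5) - (-I * x 0 - x 1) * (I * x 0 - x 1)
      + (I * x 2 + x 4) * (I * x 2 - x 4) = -(Qform x : ℂ) := by
    push_cast [Qform]
    linear_combination ((x 0 : ℂ) ^ 2 + (x 2 : ℂ) ^ 2 - (x 3 : ℂ) ^ 2) * I_sq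
  rw [← mul_one (det _), ← det_G, ← det_mul, Xm_mul_G, det_pfaffMatrix, hPf, neg_sq]

theorem transpose_Xm (x : Fin 6 → ℝ) : (Xm x)ᵀ = -(𝐆 * Xm x * 𝐆) :=
  transpose_eq_neg_mul_mul_of_transpose_mul_eq_neg G_mul_G (diagonal_transpose _)
    (by rw [Xm_mul_G, transpose_pfaffMatrix])

theorem conjTranspose_Xm (x : Fin 6 → ℝ) : (Xm x)ᴴ = -(𝐆 * (Xm x).map conj * 𝐆) := by
  change (Xm x)ᵀ.map conj = _
  rw [transpose_Xm, Matrix.map_neg _ (map_neg conj), Matrix.map_mul, Matrix.map_mul, map_conj_G]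

theorem conjTranspose_map_conj_Xm (x : Fin 6 → ℝ) : ((Xm x).map conj)ᴴ = -(𝐆 * Xm x * 𝐆) := by
  rw [← transpose_Xm]
  ext i j
  simp

theorem Xm_mul_map_conj (x : Fin 6 → ℝ) : Xm x * (Xm x).map conj = (Qform x : ℂ) • 1 := by
  rw [Xm_eq]
  ext i j
  fin_cases i <;> fin_cases j <;>
    simp [mul_apply, Fin.sum_univ_four, Complex.ext_iff, Qform, pow_two] <;> constructor <;> ring

theorem map_conj_Xm_mul (x : Fin 6 → ℝ) : (Xm x).map conj * Xm x = (Qform x : ℂ) • 1 := by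
  have h := congrArg (Matrix.map · conj) (Xm_mul_map_conj x)
  simpa [Matrix.map_mul, Matrix.map_map, Matrix.map_smul, Function.comp_def] using h

/-- For normalized x, y (both of Q-norm 1 or both of Q-norm -1), the complex-linear operator
M = X(x)·conj(X(y)) belongs to SU(2,2): M G M† = G and det M = 1, where G = diag(1,1,-1,-1).
This realizes elements of Spin(4,2) inside SU(2,2). -/
theorem spin_in_SU22 (x y : Fin 6 → ℝ)
    (hnorm : (Qform x = 1 ∧ Qform y = 1) ∨ (Qform x = -1 ∧ Qform y = -1)) :
    (Xm x * (Xm y).map (starRingEnd ℂ)) *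
        (Matrix.diagonal (fun i => ((Gv i : ℝ) : ℂ))) *
          (Xm x * (Xm y).map (starRingEnd ℂ))ᴴ =
      Matrix.diagonal (fun i => ((Gv i : ℝ) : ℂ)) ∧
    (Xm x * (Xm y).map (starRingEnd ℂ)).det = 1 := by
  have hQ : (Qform x : ℂ) * Qform y = 1 := by
    rcases hnorm with ⟨hx, hy⟩ | ⟨hx, hy⟩ <;> norm_num [hx, hy]
  have hGG (A : Matrix (Fin 4) (Fin 4) ℂ) : 𝐆 * (𝐆 * A) = A := by
    rw [← Matrix.mul_assoc, G_mul_G, Matrix.one_mul]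
  constructor
  · calc _ = Xm x * ((Xm y).map conj * Xm y) * (Xm x).map conj * 𝐆 := by
          rw [conjTranspose_mul, conjTranspose_map_conj_Xm, conjTranspose_Xm, neg_mul_neg]
          simp only [Matrix.mul_assoc, hGG]
      _ = ((Qform x : ℂ) * Qform y) • 𝐆 := by
          rw [map_conj_Xm_mul, Matrix.mul_smul, Matrix.mul_one, Matrix.smul_mul, Xm_mul_map_conj,
            smul_smul, Matrix.smul_mul, Matrix.one_mul, mul_comm]
      _ = 𝐆 := by rw [hQ, one_smul]
  · have hdet : ((Xm y).map conj).det = conj (Xm y).det := ((starRingEnd ℂ).map_det _).symm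
    rw [det_mul, hdet, det_Xm, det_Xm, map_pow, conj_ofReal, ← mul_pow, hQ, one_pow]
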